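/- For all β ∈ (−1, 1] and all real a, b, c, d, f, the matrix Ric(β,a,b,c,d,f) satisfies the identity 4(det Ric_{1,2} + det Ric_{1,3}) = 16(1+β)²(β²+β+1)a⁴ + (8(β²+β+1)b² + 4(2β²+3β+2)(c²+d²) + 4f²(β²−1)²)a² + c⁴ + d⁴ + (2f²(β−1)² + c² + d²)b² + (f²(β−1)² + 2d²)c² + f²(β−1)²d², and if moreover a > 0 and b > 0 then this quantity is strictly positive. -/

import Mathlib

open Matrix Polynomial

noncomputable section

/-- The matrix `Ric(β,a,b,c,d,f)` of the Ricci operator of `A_{4,9}^β` in the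
orthonormal basis of Lemma 1, where `l = 2a(1+β)` and
`r = 4a²(β²+β+1) + c² + d² + f²(1-β)²`. -/
def Ric (β a b c d f : ℝ) : Matrix (Fin 4) (Fin 4) ℝ :=
  (1/2 : ℝ) •
    !![b^2 + c^2 + d^2 - 4*a^2*(1+β)^2,
         -a*c*β + d*f*(1-β) - c*(2*a*(1+β)),
         -d*(a + 2*a*(1+β)),
         0;
       -a*c*β + d*f*(1-β) - c*(2*a*(1+β)),
         -2*a*(2*a*(1+β)) - b^2 - c^2 + f^2*(1-β)^2,
         -c*d - a*f*(1-β)^2 - f*(2*a*(1+β))*(1-β),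
         b*d;
       -d*(a + 2*a*(1+β)),
         -c*d - a*f*(1-β)^2 - f*(2*a*(1+β))*(1-β),
         -4*a^2*β*(1+β) - b^2 - d^2 - f^2*(1-β)^2,
         -b*c;
       0,
         b*d,
         -b*c,
         -(4*a^2*(β^2+β+1) + c^2 + d^2 + f^2*(1-β)^2)]

/-- For `β ∈ (-1,1]` and all reals `a, b, c, d, f`, the identity
`4(det Ric_{1,2} + det Ric_{1,3}) = …` holds, where `Ric_{i,j}` denotes the 2×2
submatrix of `Ric(β,a,b,c,d,f)` obtained by deleting rows and columns `i` and `j`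
(1-based); moreover if `a > 0` and `b > 0` this quantity is strictly positive. -/
theorem Ric_sum_of_two_minors (β a b c d f : ℝ) (hβ : -1 < β ∧ β ≤ 1) :
    4 * (((Ric β a b c d f).submatrix ![2, 3] ![2, 3]).det
        + ((Ric β a b c d f).submatrix ![1, 3] ![1, 3]).det) =
      16*(1+β)^2*(β^2+β+1)*a^4
        + (8*(β^2+β+1)*b^2 + 4*(2*β^2+3*β+2)*(c^2+d^2) + 4*f^2*(β^2-1)^2)*a^2
        + c^4 + d^4 + (2*f^2*(β-1)^2 + c^2 + d^2)*b^2
        + (f^2*(β-1)^2 + 2*d^2)*c^2 + f^2*(β-1)^2*d^2 ∧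
    (0 < a → 0 < b →
      0 < 4 * (((Ric β a b c d f).submatrix ![2, 3] ![2, 3]).det
        + ((Ric β a b c d f).submatrix ![1, 3] ![1, 3]).det)) := by
  have key : 4 * (((Ric β a b c d f).submatrix ![2, 3] ![2, 3]).det
        + ((Ric β a b c d f).submatrix ![1, 3] ![1, 3]).det) =
      16*(1+β)^2*(β^2+β+1)*a^4
        + (8*(β^2+β+1)*b^2 + 4*(2*β^2+3*β+2)*(c^2+d^2) + 4*f^2*(β^2-1)^2)*a^2
        + c^4 + d^4 + (2*f^2*(β-1)^2 + c^2 + d^2)*b^2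
        + (f^2*(β-1)^2 + 2*d^2)*c^2 + f^2*(β-1)^2*d^2 := by
    rw [Matrix.det_fin_two, Matrix.det_fin_two]
    simp [Ric, Matrix.det_fin_two, Matrix.submatrix_apply, Matrix.smul_apply]
    ring
  refine ⟨key, fun ha hb => ?_⟩
  rw [key]
  have h1 : 0 < β^2 + β + 1 := by nlinarith [hβ.1, sq_nonneg (β+1)]
  have h2 : (0:ℝ) ≤ 2*β^2+3*β+2 := by nlinarith [hβ.1, sq_nonneg (β+1)]
  have := sq_nonneg (1+β)
  have := sq_nonneg (β-1)
  positivity
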